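/- arXiv:2402.12678 — 8 statements merged into one kernel-verified Lean document; each statement's English description precedes it below -/
import Mathlib

section
/- Let (a_n)_{n≥0} be a sequence of non-negative real numbers, let α ≥ 0, β ≥ 0 and γ be real numbers with γ ≥ α + β, and let N ∈ ℕ. Assume that a_{n+2} + α·β·a_n ≥ γ·a_{n+1} for every n ∈ {0, …, N}, and that a_1 > β·a_0. Then for every n ∈ {0, …, N} one has a_{n+2} − β·a_{n+1} ≥ α^{n+1}·(a_1 − β·a_0); in particular, if α > 0 then a_{n+2} > β·a_{n+1} for every n ∈ {0, …, N}. -/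
/-!
Write `d n = a (n + 1) - β * a n`. Since `a (n + 1) ≥ 0`, the recursive inequality with `γ ≥ α + β`
gives `a (n + 2) + α * β * a n ≥ (α + β) * a (n + 1)`, which rearranges to `d (n + 1) ≥ α * d n`.
Iterating from `d 0 = a 1 - β * a 0 > 0` gives the geometric lower bound, and it is positive when
`α > 0`.
-/

theorem mul_sub_le_sub_of_le_add {R : Type*} [CommRing R] [LinearOrder R] [IsStrictOrderedRing R]
    {α β γ x y z : R} (hγ : α + β ≤ γ) (hy : 0 ≤ y) (h : γ * y ≤ z + α * β * x) :
    α * (y - β * x) ≤ z - β * y := by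
  linarith [mul_le_mul_of_nonneg_right hγ hy]

theorem stmt_0_general (a : ℕ → ℝ) (ha : ∀ n, 0 ≤ a n)
    (α β γ : ℝ) (hα : 0 ≤ α) (hγ : α + β ≤ γ) (N : ℕ)
    (hrec : ∀ n ≤ N, γ * a (n + 1) ≤ a (n + 2) + α * β * a n)
    (hinit : β * a 0 < a 1) :
    ∀ n ≤ N, α ^ (n + 1) * (a 1 - β * a 0) ≤ a (n + 2) - β * a (n + 1)
      ∧ (0 < α → β * a (n + 1) < a (n + 2)) := by
  intro n hn
  have hgrowth : α ^ (n + 1) * (a 1 - β * a 0) ≤ a (n + 2) - β * a (n + 1) :=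
    geom_le (u := fun k ↦ a (k + 1) - β * a k) hα (n + 1) fun k hk ↦
      mul_sub_le_sub_of_le_add hγ (ha (k + 1)) (hrec k (by omega))
  refine ⟨hgrowth, fun hα_pos ↦ ?_⟩
  have := mul_pos (pow_pos hα_pos (n + 1)) (sub_pos.2 hinit)
  linarith

/-- Finite-range recursive inequality lemma: if `a (n+2) + α*β*a n ≥ γ*a (n+1)` for
`n = 0, …, N`, with `γ ≥ α + β`, `α, β ≥ 0`, nonnegative terms, and `a 1 > β * a 0`,
then `a (n+2) - β * a (n+1) ≥ α^(n+1) * (a 1 - β * a 0)` for `n = 0, …, N`;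
in particular if `α > 0` then `a (n+2) > β * a (n+1)` on this range. -/
theorem stmt_0 (a : ℕ → ℝ) (ha : ∀ n, 0 ≤ a n)
    (α β γ : ℝ) (hα : 0 ≤ α) (hβ : 0 ≤ β) (hγ : α + β ≤ γ) (N : ℕ)
    (hrec : ∀ n ≤ N, γ * a (n + 1) ≤ a (n + 2) + α * β * a n)
    (hinit : β * a 0 < a 1) :
    ∀ n ≤ N, α ^ (n + 1) * (a 1 - β * a 0) ≤ a (n + 2) - β * a (n + 1)
      ∧ (0 < α → β * a (n + 1) < a (n + 2)) :=
  stmt_0_general a ha α β γ hα hγ N hrec hinit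
end

section
/- Let S be a noetherian quasi-sober topological space and let θ : S → ℝ be a function. Then θ is lower semicontinuous if and only if the following two conditions hold: (i) for all points x, y ∈ S with y ∈ closure{x}, one has θ(y) ≤ θ(x); (ii) for every x ∈ S and every real number a < θ(x), there exists an open subset U of S containing x such that θ(z) > a for every z ∈ U ∩ closure{x}. -/
/-!
A function is lower semicontinuous iff every sublevel set `C = {θ ≤ a}` is closed. Condition (i)
says `C` is stable under specialization, condition (ii) that a point `x ∉ C` is not in the closure
of `closure {x} ∩ C`. Such a set is closed by noetherian induction on a closed set `Z`, proving
`closure (Z ∩ C) ⊆ C`: if `Z` is reducible, split it into two smaller closed sets; if `Z` is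
irreducible with generic point `η`, either `η ∈ C` and then `Z ⊆ C`, or `η ∉ C` and then
`closure (Z ∩ C)` is a proper closed subset of `Z`.
-/

open Set TopologicalSpace

section

variable {S : Type*} [TopologicalSpace S]

theorem LowerSemicontinuous.le_of_specializes {γ : Type*} [LinearOrder γ] {θ : S → γ}
    (hθ : LowerSemicontinuous θ) {x y : S} (h : x ⤳ y) : θ y ≤ θ x :=
  h.mem_closed (hθ.isClosed_preimage (θ x)) le_rfl

section Noetherian

variable [NoetherianSpace S] [QuasiSober S] {C : Set S}

theorem closure_inter_subset_of_stableUnderSpecialization (hC : StableUnderSpecialization C)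
    (hgen : ∀ x ∉ C, x ∉ closure (closure {x} ∩ C)) (Z : Closeds S) :
    closure (Z ∩ C) ⊆ C := by
  induction Z using WellFoundedLT.induction with
  | _ Z IH =>
  have hZ : closure ((Z : Set S) ∩ C) ⊆ Z := closure_minimal inter_subset_left Z.isClosed
  by_cases hirr : IsPreirreducible (Z : Set S)
  · rcases (Z : Set S).eq_empty_or_nonempty with hempty | hne
    · simp [hempty]
    obtain ⟨η, hη⟩ := QuasiSober.sober ⟨hne, hirr⟩ Z.isClosed
    by_cases hηC : η ∈ C
    · exact hZ.trans fun y hy => hC (hη.specializes hy) hηC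
    · let W : Closeds S := ⟨closure (Z ∩ C), isClosed_closure⟩
      have hWZ : W < Z := by
        refine lt_of_le_of_ne hZ fun hWZ => hgen η hηC ?_
        rw [hη.def]
        change η ∈ (W : Set S)
        rw [hWZ]
        exact hη.mem
      have hshrink : (Z : Set S) ∩ C ⊆ W ∩ C := fun z hz => ⟨subset_closure hz, hz.2⟩
      exact (closure_mono hshrink).trans (IH W hWZ)
  · simp only [isPreirreducible_iff_isClosed_union_isClosed, not_forall, not_or] at hirr
    obtain ⟨Z₁, Z₂, hZ₁, hZ₂, hcover, hZ₁', hZ₂'⟩ := hirr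
    lift Z₁ to Closeds S using hZ₁
    lift Z₂ to Closeds S using hZ₂
    have hsplit : (Z : Set S) ∩ C ⊆ ((Z ⊓ Z₁ : Closeds S) ∩ C) ∪ ((Z ⊓ Z₂ : Closeds S) ∩ C) :=
      fun z hz => (hcover hz.1).imp (fun h => ⟨⟨hz.1, h⟩, hz.2⟩) (fun h => ⟨⟨hz.1, h⟩, hz.2⟩)
    refine (closure_mono hsplit).trans ?_
    rw [closure_union]
    exact union_subset (IH _ (inf_lt_left.2 hZ₁')) (IH _ (inf_lt_left.2 hZ₂'))

theorem isClosed_of_stableUnderSpecialization (hC : StableUnderSpecialization C)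
    (hgen : ∀ x ∉ C, x ∉ closure (closure {x} ∩ C)) : IsClosed C :=
  isClosed_of_closure_subset <| by
    simpa using closure_inter_subset_of_stableUnderSpecialization hC hgen ⊤

end Noetherian

end

/-- Criterion for lower semicontinuity on a noetherian quasi-sober space:
`θ` is lower semicontinuous iff (i) `θ` is non-decreasing under specialization
(`y ∈ closure {x}` implies `θ y ≤ θ x`), and (ii) for every `x` and `a < θ x`
there is an open set `U ∋ x` with `θ > a` on `U ∩ closure {x}`. -/
theorem stmt_2 {S : Type*} [TopologicalSpace S] [TopologicalSpace.NoetherianSpace S]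
    [QuasiSober S] (θ : S → ℝ) :
    LowerSemicontinuous θ ↔
      ((∀ x y : S, y ∈ closure {x} → θ y ≤ θ x) ∧
        (∀ x : S, ∀ a : ℝ, a < θ x →
          ∃ U : Set S, IsOpen U ∧ x ∈ U ∧ ∀ z ∈ U ∩ closure {x}, a < θ z)) := by
  constructor
  · intro hθ
    exact ⟨fun x y hy => hθ.le_of_specializes (specializes_iff_mem_closure.2 hy),
      fun x a ha => ⟨θ ⁻¹' Ioi a, hθ.isOpen_preimage a, ha, fun z hz => hz.1⟩⟩
  · rintro ⟨hmono, hnhds⟩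
    refine lowerSemicontinuous_iff_isClosed_preimage.2 fun a => ?_
    refine isClosed_of_stableUnderSpecialization
      (fun x y hxy hx => (hmono x y (specializes_iff_mem_closure.1 hxy)).trans hx)
      (fun x hx hcl => ?_)
    obtain ⟨U, hU, hxU, hUa⟩ := hnhds x a (not_le.1 hx)
    obtain ⟨z, hzU, hzx, hza⟩ := mem_closure_iff.1 hcl U hU hxU
    exact (hUa z ⟨hzU, hzx⟩).not_ge hza
end

section
/- Let S be a noetherian topological space and let θ : S → ℝ be a lower semicontinuous function. Then the image θ(S) is well-ordered by the usual order of ℝ: every nonempty subset of θ(S) has a least element. -/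
open Set TopologicalSpace

/-!
A strict inequality `θ x < θ y` makes the sublevel set `θ⁻¹(-∞, θ x]` a proper subset of
`θ⁻¹(-∞, θ y]`, since `y` lies only in the second. Lower semicontinuity makes these sublevel sets
closed, so a strictly decreasing sequence of values of `θ` would give a strictly decreasing chain
of closed sets, which a noetherian space does not have.
-/

namespace LowerSemicontinuous

variable {S β : Type*} [TopologicalSpace S] [LinearOrder β] {θ : S → β}

def sublevelCloseds (hθ : LowerSemicontinuous θ) (a : β) : Closeds S :=
  ⟨θ ⁻¹' Iic a, hθ.isClosed_preimage a⟩

theorem sublevelCloseds_lt_of_lt (hθ : LowerSemicontinuous θ) {x y : S} (hxy : θ x < θ y) :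
    hθ.sublevelCloseds (θ x) < hθ.sublevelCloseds (θ y) :=
  SetLike.lt_iff_le_and_exists.2 ⟨fun _ hs => le_trans hs hxy.le, y, le_rfl, not_le.2 hxy⟩

theorem isWF_range [NoetherianSpace S] (hθ : LowerSemicontinuous θ) : (range θ).IsWF :=
  wellFoundedOn_range.2 <|
    Subrelation.wf (hθ.sublevelCloseds_lt_of_lt ·)
      (InvImage.wf (hθ.sublevelCloseds ∘ θ) wellFounded_lt)

end LowerSemicontinuous

/-- On a noetherian topological space, the image of a lower semicontinuous real-valued
function is well-ordered by the usual order: every nonempty subset of the image has a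
least element. -/
theorem stmt_3 {S : Type*} [TopologicalSpace S] [TopologicalSpace.NoetherianSpace S]
    (θ : S → ℝ) (hθ : LowerSemicontinuous θ) :
    ∀ T ⊆ Set.range θ, T.Nonempty → ∃ m ∈ T, ∀ t ∈ T, m ≤ t := by
  intro T hT hne
  have hwf : T.IsWF := hθ.isWF_range.mono hT
  exact ⟨hwf.min hne, hwf.min_mem hne, fun _ => hwf.min_le hne⟩
end

section
/- Let S be a nonempty noetherian, quasi-sober, T0 topological space and let θ : S → ℝ be a lower semicontinuous function whose image θ(S) is a discrete subset of ℝ. Then θ(S) is finite, and for every a ∈ ℝ the fiber θ⁻¹({a}) is a locally closed subset of S (it is the set-difference of two closed subsets of S). -/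
/-!
Lower semicontinuity makes `θ` monotone along specialization, so on an irreducible closed set `Z`
the maximum of `θ` is attained at the generic point `η`. Discreteness of the image gives a
`b < θ η` such that `θ` takes no value in `(b, θ η)`, so `θ` is constant equal to `θ η` on
`Z ∩ {θ > b}`, and the rest of `Z` is a proper closed subset. Noetherian induction over
closed sets, after splitting each into finitely many irreducible closed pieces, shows that `θ`
has finite image. Each fiber is then `{θ ≤ a} \ {θ < a}`, and `{θ < a}` is the finite union of
the closed sets `{θ ≤ c}` over the values `c < a`.
-/

open Set Topology TopologicalSpace

theorem LowerSemicontinuous.le_of_specializes_s4 {α β : Type*} [TopologicalSpace α] [LinearOrder β]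
    {f : α → β} (hf : LowerSemicontinuous f) {x y : α} (h : x ⤳ y) : f y ≤ f x :=
  not_lt.1 fun hlt => lt_irrefl (f x) (h.mem_open (hf.isOpen_preimage (f x)) hlt)

theorem LowerSemicontinuous.isClosed_preimage_Iio {α β : Type*} [TopologicalSpace α]
    [LinearOrder β] {f : α → β} (hf : LowerSemicontinuous f) (hfin : (range f).Finite) (a : β) :
    IsClosed (f ⁻¹' Iio a) := by
  have hunion : f ⁻¹' Iio a = ⋃ c ∈ range f ∩ Iio a, f ⁻¹' Iic c := by
    ext x
    simp only [mem_preimage, mem_Iio, mem_iUnion, mem_inter_iff, mem_range, mem_Iic,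
      exists_prop]
    exact ⟨fun hx => ⟨f x, ⟨⟨x, rfl⟩, hx⟩, le_rfl⟩, fun ⟨c, ⟨_, hc⟩, hxc⟩ => hxc.trans_lt hc⟩
  rw [hunion]
  exact (hfin.inter_of_left _).isClosed_biUnion fun c _ => hf.isClosed_preimage c

theorem exists_lt_inter_Ioc_subset_singleton {β : Type*} [LinearOrder β] [TopologicalSpace β]
    [OrderTopology β] [NoMinOrder β] {s : Set β} {a : β} (h : ∃ U ∈ 𝓝 a, U ∩ s = {a}) :
    ∃ b < a, s ∩ Ioc b a ⊆ {a} := by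
  obtain ⟨U, hU, hUs⟩ := h
  obtain ⟨b, hb, hbU⟩ := exists_Ioc_subset_of_mem_nhds hU (exists_lt a)
  exact ⟨b, hb, fun c ⟨hcs, hc⟩ => hUs ▸ ⟨hbU hc, hcs⟩⟩

section DiscreteRange

variable {S β : Type*} [TopologicalSpace S] [LinearOrder β] [TopologicalSpace β]
  [OrderTopology β] [NoMinOrder β] {θ : S → β}

theorem exists_closeds_lt_image_subset_insert [QuasiSober S] (hθ : LowerSemicontinuous θ)
    (hdisc : ∀ a ∈ range θ, ∃ U ∈ 𝓝 a, U ∩ range θ = {a}) {Z : Closeds S}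
    (hZ : IsIrreducible (Z : Set S)) :
    ∃ Z' < Z, ∃ a, θ '' Z ⊆ insert a (θ '' Z') := by
  obtain ⟨η, hη⟩ := QuasiSober.sober hZ Z.isClosed
  obtain ⟨b, hb, hgap⟩ := exists_lt_inter_Ioc_subset_singleton (hdisc (θ η) (mem_range_self η))
  let Z' : Closeds S := ⟨Z \ θ ⁻¹' Ioi b, Z.isClosed.sdiff (hθ.isOpen_preimage b)⟩
  refine ⟨Z', SetLike.lt_iff_le_and_exists.2 ⟨fun x hx => hx.1, η, hη.mem, fun h => h.2 hb⟩,
    θ η, ?_⟩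
  rintro _ ⟨x, hx, rfl⟩
  by_cases hxb : b < θ x
  · exact Or.inl (hgap ⟨mem_range_self x, hxb, hθ.le_of_specializes_s4 (hη.specializes hx)⟩)
  · exact Or.inr ⟨x, ⟨hx, hxb⟩, rfl⟩

theorem finite_image_closeds [NoetherianSpace S] [QuasiSober S] (hθ : LowerSemicontinuous θ)
    (hdisc : ∀ a ∈ range θ, ∃ U ∈ 𝓝 a, U ∩ range θ = {a}) (Z : Closeds S) :
    (θ '' Z).Finite := by
  induction Z using WellFoundedLT.induction with
  | _ Z IH =>
  have finite_of_irreducible : ∀ t ≤ Z, IsIrreducible (t : Set S) → (θ '' t).Finite := by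
    intro t ht hirr
    obtain hlt | rfl := ht.lt_or_eq
    · exact IH t hlt
    · obtain ⟨Z', hZ', a, hsub⟩ := exists_closeds_lt_image_subset_insert hθ hdisc hirr
      exact ((IH Z' hZ').insert a).subset hsub
  obtain ⟨T, hTfin, hTclosed, hTirr, hZT⟩ :=
    NoetherianSpace.exists_finite_set_isClosed_irreducible Z.isClosed
  rw [hZT, sUnion_eq_biUnion, image_iUnion₂]
  exact hTfin.biUnion fun t ht =>
    finite_of_irreducible ⟨t, hTclosed t ht⟩ (hZT.symm ▸ subset_sUnion_of_mem ht : t ⊆ Z)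
      (hTirr t ht)

end DiscreteRange

theorem stmt_4_general {S : Type*} [TopologicalSpace S] [TopologicalSpace.NoetherianSpace S]
    [QuasiSober S] (θ : S → ℝ)
    (hθ : LowerSemicontinuous θ)
    (hdisc : ∀ a ∈ Set.range θ, ∃ U ∈ nhds a, U ∩ Set.range θ = {a}) :
    (Set.range θ).Finite ∧
      ∀ a : ℝ, ∃ Z₁ Z₂ : Set S, IsClosed Z₁ ∧ IsClosed Z₂ ∧ θ ⁻¹' {a} = Z₁ \ Z₂ := by
  have hfin : (range θ).Finite := by
    simpa only [Closeds.coe_top, image_univ] using finite_image_closeds hθ hdisc ⊤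
  refine ⟨hfin, fun a => ⟨θ ⁻¹' Iic a, θ ⁻¹' Iio a, hθ.isClosed_preimage a,
    hθ.isClosed_preimage_Iio hfin a, ?_⟩⟩
  rw [← preimage_sdiff, Iic_sdiff_Iio_same]

/-- On a nonempty noetherian, quasi-sober, T0 topological space, a lower semicontinuous
real-valued function whose image is a discrete subset of `ℝ` has finite image, and each
of its fibers is the difference of two closed subsets (hence locally closed). -/
theorem stmt_4 {S : Type*} [TopologicalSpace S] [TopologicalSpace.NoetherianSpace S]
    [QuasiSober S] [T0Space S] [Nonempty S] (θ : S → ℝ)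
    (hθ : LowerSemicontinuous θ)
    (hdisc : ∀ a ∈ Set.range θ, ∃ U ∈ nhds a, U ∩ Set.range θ = {a}) :
    (Set.range θ).Finite ∧
      ∀ a : ℝ, ∃ Z₁ Z₂ : Set S, IsClosed Z₁ ∧ IsClosed Z₂ ∧ θ ⁻¹' {a} = Z₁ \ Z₂ :=
  stmt_4_general θ hθ hdisc
end

section
/- Let (a_n)_{n≥1} be a sequence of non-negative real numbers such that for every n ≥ 1 one has a_{n+1} ≤ (a_1 + a_2 + ⋯ + a_n)/n (each term is at most the average of all previous terms). Then for all integers r ≥ 1 and s ≥ 1 one has a_r + a_{r+1} + ⋯ + a_{r+s−1} ≤ a_1 + a_2 + ⋯ + a_s (every window sum of length s is at most the initial window sum of length s). -/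
/-!
Writing `S n = a₁ + ⋯ + aₙ`, the averaging condition says exactly that the prefix averages
`S n / n` are non-increasing. With `A = S (m + n) / (m + n)` this gives `S m ≥ m A` and
`S n ≥ n A`, hence `S (m + n) - S m ≤ n A ≤ S n`; the window sum starting at `r = m + 1` is
`S (m + s) - S m`.
-/

open Finset

theorem subadditive_of_antitoneOn_div {S : ℕ → ℝ} (h0 : S 0 = 0)
    (hS : AntitoneOn (fun n : ℕ => S n / n) (Set.Ici 1)) : Subadditive S := by
  intro m n
  rcases Nat.eq_zero_or_pos m with rfl | hm
  · simp [h0]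
  rcases Nat.eq_zero_or_pos n with rfl | hn
  · simp [h0]
  set A := S (m + n) / (m + n : ℕ)
  have hmA : m * A ≤ S m := by
    rw [← le_div_iff₀' (by positivity)]
    exact hS (Set.mem_Ici.2 hm) (Set.mem_Ici.2 (by omega)) (by omega)
  have hnA : n * A ≤ S n := by
    rw [← le_div_iff₀' (by positivity)]
    exact hS (Set.mem_Ici.2 hn) (Set.mem_Ici.2 (by omega)) (by omega)
  have hA : S (m + n) = (m + n) * A := by
    rw [← Nat.cast_add, mul_div_cancel₀ _ (by positivity)]
  linarith

theorem div_succ_le_div_of_le_div {x t : ℝ} {n : ℕ} (hn : 1 ≤ n) (hx : x ≤ t / n) :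
    (t + x) / (n + 1 : ℕ) ≤ t / n := by
  have hn' : (0 : ℝ) < n := by exact_mod_cast hn
  rw [div_le_div_iff₀ (by positivity) hn', Nat.cast_succ]
  rw [le_div_iff₀ hn'] at hx
  nlinarith

theorem antitoneOn_sum_Icc_div {a : ℕ → ℝ}
    (havg : ∀ n : ℕ, 1 ≤ n → a (n + 1) ≤ (∑ i ∈ Icc 1 n, a i) / n) :
    AntitoneOn (fun n : ℕ => (∑ i ∈ Icc 1 n, a i) / n) (Set.Ici 1) := by
  refine antitoneOn_nat_Ici_of_succ_le fun n hn => ?_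
  rw [sum_Icc_succ_top (by omega)]
  exact div_succ_le_div_of_le_div hn (havg n hn)

theorem sum_Ico_add_eq_sub (a : ℕ → ℝ) (m s : ℕ) :
    ∑ i ∈ Ico (m + 1) (m + 1 + s), a i = ∑ i ∈ Icc 1 (m + s), a i - ∑ i ∈ Icc 1 m, a i := by
  have hIcc (n : ℕ) : Icc 1 n = Ioc 0 n := Icc_add_one_left_eq_Ioc 0 n
  rw [eq_sub_iff_add_eq', add_right_comm, Ico_add_one_add_one_eq_Ioc, hIcc, hIcc,
    sum_Ioc_consecutive _ (Nat.zero_le m) (Nat.le_add_right m s)]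

theorem stmt_6_general (a : ℕ → ℝ)
    (havg : ∀ n : ℕ, 1 ≤ n → a (n + 1) ≤ (∑ i ∈ Finset.Icc 1 n, a i) / n) :
    ∀ r s : ℕ, 1 ≤ r → 1 ≤ s →
      ∑ i ∈ Finset.Ico r (r + s), a i ≤ ∑ i ∈ Finset.Icc 1 s, a i := by
  intro r s hr _
  obtain ⟨m, rfl⟩ := Nat.exists_eq_add_of_le' hr
  have hsub := subadditive_of_antitoneOn_div (by simp) (antitoneOn_sum_Icc_div havg) m s
  rw [sum_Ico_add_eq_sub]
  linarith

/-- If each term of a nonnegative sequence `a₁, a₂, …` is at most the average of all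
previous terms, then every window sum `a_r + ⋯ + a_{r+s-1}` of length `s` is at most the
initial window sum `a_1 + ⋯ + a_s`. (The sequence is indexed so that `a 0` is irrelevant.) -/
theorem stmt_6 (a : ℕ → ℝ) (ha : ∀ n, 1 ≤ n → 0 ≤ a n)
    (havg : ∀ n : ℕ, 1 ≤ n → a (n + 1) ≤ (∑ i ∈ Finset.Icc 1 n, a i) / n) :
    ∀ r s : ℕ, 1 ≤ r → 1 ≤ s →
      ∑ i ∈ Finset.Ico r (r + s), a i ≤ ∑ i ∈ Finset.Icc 1 s, a i :=
  stmt_6_general a havg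
end

section
/- There exists a sequence (A_n)_{n≥0} of real numbers with A_n ≥ 1 for all n, such that: (1) A_{m+n} ≤ A_m · A_n for all m, n ≥ 0 (submultiplicativity); (2) the limit λ := lim_{n→∞} A_n^{1/n} exists and satisfies λ > 1; and (3) for every integer m ≥ 1 there are infinitely many integers n ≥ 0 with A_{m(n+1)} = A_{mn}; in particular, for every m ≥ 1 it is not the case that A_{m(n+1)}/A_{mn} ≥ δ^m λ^m eventually in n for any δ ∈ (λ^{−1}, 1]. -/
/-!
Take `A n = 2 ^ (n + s n)`, where `s` is the binary digit sum. By Legendre's formula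
`n - s n = v₂(n!)`, and `m! n! ∣ (m + n)!` makes `s` subadditive, so `A` is submultiplicative;
since `s n = O(log n)`, `A n ^ (1 / n) → 2`. Passing from `m n` to `m (n + 1)` adds `m` to the
exponent's first term, but carries can lower the digit sum by exactly `m`, which happens for
infinitely many `n`; at those `n` the ratio `A (m (n + 1)) / A (m n)` is `1`.
-/

open Filter

namespace Nat

variable {b : ℕ}

theorem sum_digits_add_mul (hb : 1 < b) {r : ℕ} (hr : r < b) (c : ℕ) :
    (b.digits (r + b * c)).sum = r + (b.digits c).sum := by
  rcases (r + b * c).eq_zero_or_pos with h | h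
  · obtain ⟨rfl, hbc⟩ := Nat.add_eq_zero_iff.1 h
    obtain rfl : c = 0 := (mul_eq_zero.1 hbc).resolve_left (by omega)
    simp
  · rw [digits_def' hb h, List.sum_cons, Nat.add_mul_div_left _ _ (by omega),
      Nat.add_mul_mod_self_left, Nat.div_eq_of_lt hr, Nat.mod_eq_of_lt hr, zero_add]

theorem sum_digits_add_sum_digits_pow_sub_one_sub (hb : 1 < b) {t a : ℕ} (ha : a < b ^ t) :
    (b.digits a).sum + (b.digits (b ^ t - 1 - a)).sum = (b - 1) * t := by
  induction t generalizing a with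
  | zero => simp_all
  | succ t ih =>
    obtain ⟨q, r, hr, rfl⟩ : ∃ q r, r < b ∧ a = r + b * q :=
      ⟨a / b, a % b, Nat.mod_lt a (by omega), (Nat.mod_add_div a b).symm⟩
    have hq : q < b ^ t := by
      rw [pow_succ] at ha; nlinarith
    have hsplit : b ^ (t + 1) - 1 - (r + b * q) = (b - 1 - r) + b * (b ^ t - 1 - q) := by
      obtain ⟨c, hc⟩ : ∃ c, b ^ t = q + 1 + c := ⟨b ^ t - q - 1, by omega⟩
      rw [pow_succ', hc, show q + 1 + c - 1 - q = c by omega,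
        show b * (q + 1 + c) = b * q + b + b * c by ring]
      omega
    rw [hsplit, sum_digits_add_mul hb hr, sum_digits_add_mul hb (by omega), mul_add_one, ← ih hq]
    omega

theorem sum_digits_add_pow_mul (hb : 1 < b) {J a : ℕ} (ha : a < b ^ J) (c : ℕ) :
    (b.digits (a + b ^ J * c)).sum = (b.digits a).sum + (b.digits c).sum := by
  rcases c.eq_zero_or_pos with rfl | hc
  · simp
  have hlen : (b.digits a).length ≤ J := (digits_length_le_iff hb a).2 ha
  rw [← Nat.add_sub_cancel' hlen, ← digits_append_zeroes_append_digits hb hc]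
  simp

theorem sum_digits_pow_mul (hb : 1 < b) (J c : ℕ) :
    (b.digits (b ^ J * c)).sum = (b.digits c).sum := by
  simpa using sum_digits_add_pow_mul hb (pow_pos (zero_lt_one.trans hb) J) c

theorem sum_digits_mul_pow_sub_one (hb : 1 < b) {m t : ℕ} (hm : 1 ≤ m) (hmt : m ≤ b ^ t) :
    (b.digits (m * (b ^ t - 1))).sum = (b - 1) * t := by
  have hsplit : m * (b ^ t - 1) = (b ^ t - 1 - (m - 1)) + b ^ t * (m - 1) := by
    obtain ⟨k, rfl⟩ : ∃ k, m = k + 1 := ⟨m - 1, by omega⟩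
    obtain ⟨c, hc⟩ : ∃ c, b ^ t = k + 1 + c := ⟨b ^ t - k - 1, by omega⟩
    rw [hc, show k + 1 + c - 1 - (k + 1 - 1) = c by omega, show k + 1 + c - 1 = k + c by omega,
      Nat.add_sub_cancel]
    ring
  rw [hsplit, sum_digits_add_pow_mul hb (by omega), add_comm,
    sum_digits_add_sum_digits_pow_sub_one_sub hb (by omega)]

theorem sum_digits_le_mul_log_add_one (hb : 1 < b) (n : ℕ) :
    (b.digits n).sum ≤ (b - 1) * (Nat.log b n + 1) := by
  rcases eq_or_ne n 0 with rfl | hn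
  · simp
  calc (b.digits n).sum ≤ (b.digits n).length • (b - 1) :=
        List.sum_le_card_nsmul _ _ fun d hd => by have := digits_lt_base hb hd; omega
    _ = (b - 1) * (Nat.log b n + 1) := by rw [length_digits b n hb hn, smul_eq_mul, mul_comm]

theorem sum_digits_add_le {p : ℕ} [Fact p.Prime] (a c : ℕ) :
    (p.digits (a + c)).sum ≤ (p.digits a).sum + (p.digits c).sum := by
  have hv : padicValNat p (a !) + padicValNat p (c !) ≤ padicValNat p ((a + c)!) := by
    rw [← padicValNat.mul (factorial_ne_zero a) (factorial_ne_zero c)]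
    exact (padicValNat_dvd_iff_le (factorial_ne_zero _)).1
      (pow_padicValNat_dvd.trans (factorial_mul_factorial_dvd_factorial_add a c))
  have hv' := Nat.mul_le_mul_left (p - 1) hv
  rw [mul_add, sub_one_mul_padicValNat_factorial, sub_one_mul_padicValNat_factorial,
    sub_one_mul_padicValNat_factorial] at hv'
  have := digit_sum_le p a
  have := digit_sum_le p c
  have := digit_sum_le p (a + c)
  omega

/-- With `t = m + s(m)` and `x = m (2^t - 1)`, whose binary digit sum is `t`, the witness
`n = (2^t - 1)(2^J + 1)` makes `m n` and `m (n + 1)` the concatenations of `x` with `x` and with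
`2^t m`; their digit sums differ by `t - s(m) = m`. -/
theorem exists_mul_succ_add_sum_digits_two_eq {m : ℕ} (hm : 1 ≤ m) (N : ℕ) :
    ∃ n ≥ N, m * (n + 1) + (digits 2 (m * (n + 1))).sum = m * n + (digits 2 (m * n)).sum := by
  set t := m + (digits 2 m).sum
  have hmt : m ≤ 2 ^ t :=
    (Nat.lt_two_pow_self (n := m)).le.trans (Nat.pow_le_pow_right two_pos (by omega))
  have ht : 0 < 2 ^ t - 1 := by have := Nat.one_lt_two_pow (n := t) (by omega); omega
  set x := m * (2 ^ t - 1) with hx_def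
  have hx : (digits 2 x).sum = t := by simpa using sum_digits_mul_pow_sub_one one_lt_two hm hmt
  have hxm : x + m = 2 ^ t * m := by
    have := Nat.le_mul_of_pos_left m (pow_pos two_pos t)
    rw [hx_def, Nat.mul_sub_one, mul_comm]
    omega
  set J := 2 ^ t * m + N
  have hJ : 2 ^ t * m < 2 ^ J :=
    Nat.lt_two_pow_self.trans_le (Nat.pow_le_pow_right two_pos (by omega))
  refine ⟨(2 ^ t - 1) * (2 ^ J + 1), ?_, ?_⟩
  · have := Nat.le_mul_of_pos_left (2 ^ J + 1) ht
    have := Nat.lt_two_pow_self (n := J)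
    omega
  · have hn : m * ((2 ^ t - 1) * (2 ^ J + 1)) = x + 2 ^ J * x := by ring
    have hn' : m * ((2 ^ t - 1) * (2 ^ J + 1) + 1) = 2 ^ t * m + 2 ^ J * x := by
      rw [mul_add_one, hn]
      omega
    rw [hn, hn', sum_digits_add_pow_mul one_lt_two (a := x) (by omega),
      sum_digits_add_pow_mul one_lt_two hJ, sum_digits_pow_mul one_lt_two, hx]
    omega

end Nat

theorem tendsto_sum_digits_div_atTop {b : ℕ} (hb : 1 < b) :
    Tendsto (fun n : ℕ => ((b.digits n).sum : ℝ) / n) atTop (nhds 0) := by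
  have hlogb : Tendsto (fun n : ℕ => Real.logb b n / n) atTop (nhds 0) := by
    simpa [Function.comp_def] using
      (Real.tendsto_pow_logb_div_mul_add_atTop (b := b) 1 0 1 one_ne_zero).comp
        tendsto_natCast_atTop_atTop
  have hbound : Tendsto (fun n : ℕ => ((b : ℝ) - 1) * (Real.logb b n / n + 1 / n)) atTop
      (nhds 0) := by
    simpa using (hlogb.add tendsto_one_div_atTop_nhds_zero_nat).const_mul ((b : ℝ) - 1)
  refine squeeze_zero' (Eventually.of_forall fun n => by positivity) ?_ hbound
  filter_upwards [eventually_gt_atTop 0] with n hn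
  have hsum : ((b.digits n).sum : ℝ) ≤ ((b : ℝ) - 1) * (Real.logb b n + 1) := by
    have h := Nat.cast_le (α := ℝ) |>.2 (Nat.sum_digits_le_mul_log_add_one hb n)
    rw [Nat.cast_mul, Nat.cast_sub hb.le, Nat.cast_add, Nat.cast_one] at h
    refine h.trans (mul_le_mul_of_nonneg_left ?_ (sub_nonneg.2 (by exact_mod_cast hb.le)))
    gcongr
    exact Real.natLog_le_logb n b
  calc ((b.digits n).sum : ℝ) / n ≤ ((b : ℝ) - 1) * (Real.logb b n + 1) / n := by gcongr
    _ = ((b : ℝ) - 1) * (Real.logb b n / n + 1 / n) := by ring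

def twoPowAddDigitSum (n : ℕ) : ℝ := 2 ^ (n + (Nat.digits 2 n).sum)

theorem one_le_twoPowAddDigitSum (n : ℕ) : 1 ≤ twoPowAddDigitSum n :=
  one_le_pow₀ one_le_two

theorem twoPowAddDigitSum_add_le (m n : ℕ) :
    twoPowAddDigitSum (m + n) ≤ twoPowAddDigitSum m * twoPowAddDigitSum n := by
  rw [twoPowAddDigitSum, twoPowAddDigitSum, twoPowAddDigitSum, ← pow_add]
  have := Nat.sum_digits_add_le (p := 2) m n
  exact pow_le_pow_right₀ one_le_two (by omega)

theorem tendsto_twoPowAddDigitSum_rpow_inv :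
    Tendsto (fun n : ℕ => twoPowAddDigitSum n ^ (n : ℝ)⁻¹) atTop (nhds 2) := by
  have h : Tendsto (fun n : ℕ => (2 : ℝ) ^ (1 + ((Nat.digits 2 n).sum : ℝ) / n)) atTop
      (nhds 2) := by
    simpa [Function.comp_def] using (Real.continuousAt_const_rpow two_ne_zero).tendsto.comp
      ((tendsto_sum_digits_div_atTop one_lt_two).const_add 1)
  refine h.congr' ?_
  filter_upwards [eventually_gt_atTop 0] with n hn
  rw [twoPowAddDigitSum, ← Real.rpow_natCast, ← Real.rpow_mul zero_le_two]
  congr 1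
  push_cast
  field_simp

theorem exists_twoPowAddDigitSum_mul_succ_eq {m : ℕ} (hm : 1 ≤ m) (N : ℕ) :
    ∃ n ≥ N, twoPowAddDigitSum (m * (n + 1)) = twoPowAddDigitSum (m * n) := by
  obtain ⟨n, hnN, hn⟩ := Nat.exists_mul_succ_add_sum_digits_two_eq hm N
  exact ⟨n, hnN, by rw [twoPowAddDigitSum, twoPowAddDigitSum, hn]⟩

theorem not_eventually_le_div_of_frequently_eq {u v : ℕ → ℝ} {c : ℝ} (hc : 1 < c)
    (h : ∃ᶠ n in atTop, u n = v n) : ¬ ∀ᶠ n in atTop, c ≤ u n / v n := by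
  intro hle
  obtain ⟨n, hn, heq⟩ := (hle.and_frequently h).exists
  rw [heq] at hn
  linarith [div_self_le_one (v n)]

/-- There is a submultiplicative sequence `A_n ≥ 1` whose growth rate
`λ = lim A_n^{1/n}` exists and is `> 1`, yet for every `m ≥ 1` there are infinitely many
`n` with `A_{m(n+1)} = A_{mn}`; in particular for every `m ≥ 1` and every
`δ ∈ (λ⁻¹, 1]` it is not true that eventually `A_{m(n+1)}/A_{mn} ≥ δ^m λ^m`. -/
theorem stmt_8 :
    ∃ A : ℕ → ℝ, (∀ n, 1 ≤ A n) ∧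
      (∀ m n : ℕ, A (m + n) ≤ A m * A n) ∧
      ∃ l : ℝ,
        Tendsto (fun n : ℕ => (A n) ^ ((n : ℝ)⁻¹)) atTop (nhds l) ∧ 1 < l ∧
        (∀ m : ℕ, 1 ≤ m → ∀ N : ℕ, ∃ n ≥ N, A (m * (n + 1)) = A (m * n)) ∧
        (∀ m : ℕ, 1 ≤ m → ∀ δ : ℝ, l⁻¹ < δ → δ ≤ 1 →
          ¬ (∀ᶠ n : ℕ in atTop, δ ^ m * l ^ m ≤ A (m * (n + 1)) / A (m * n))) := by
  refine ⟨twoPowAddDigitSum, one_le_twoPowAddDigitSum, twoPowAddDigitSum_add_le, 2,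
    tendsto_twoPowAddDigitSum_rpow_inv, one_lt_two,
    fun m hm => exists_twoPowAddDigitSum_mul_succ_eq hm, fun m hm δ hδ _ => ?_⟩
  have hδ2 : 1 < δ * 2 := by norm_num at hδ; linarith
  rw [← mul_pow]
  exact not_eventually_le_div_of_frequently_eq (one_lt_pow₀ hδ2 (by omega))
    (frequently_atTop.2 (exists_twoPowAddDigitSum_mul_succ_eq hm))
end

section
/- Let N ≥ 1 be an integer and let W be a set of positive integers (so 0 ∉ W) whose counting function has zero density: if w_n denotes the number of elements k of W with 1 ≤ k ≤ n, then w_n/n → 0 as n → ∞. Let p : ℕ → ℕ be a function with p(0) = 0 such that for every j ≥ 0: if p(j) ∉ W then p(j+1) = p(j) + 1, and if p(j) ∈ W then p(j) < p(j+1) ≤ p(j) + N. For each n ≥ 1 let r(n) be the least integer r with n ≤ p(r) (such r exists since p is strictly increasing, hence unbounded). Then r(n)/n → 1 as n → ∞. -/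
/-!
Each step of `p` outside `W` has length one and each step from a point of `W` has length at
most `N`, so `p j ≤ j + (N - 1) · #{i < j | p i ∈ W}`. For `j = r n` the values `p i`, `i < j`,
are distinct and lie below `n`, so that count is at most `w_n`, whence
`n ≤ r n + (N - 1) w_n`; together with `r n ≤ n` and `w_n / n → 0` this squeezes `r n / n` to `1`.
-/

open Filter Finset Topology

lemma le_add_mul_card_filter_range {W : Set ℕ} [DecidablePred (· ∈ W)] {p : ℕ → ℕ} {c : ℕ}
    (hoff : ∀ j, p j ∉ W → p (j + 1) ≤ p j + 1)
    (hon : ∀ j, p j ∈ W → p (j + 1) ≤ p j + 1 + c) (j : ℕ) :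
    p j ≤ p 0 + j + c * #{i ∈ range j | p i ∈ W} := by
  induction j with
  | zero => simp
  | succ k ih =>
    rw [range_add_one, filter_insert]
    by_cases hk : p k ∈ W
    · rw [if_pos hk, card_insert_of_notMem (by simp), mul_add_one]
      linarith [hon k hk]
    · rw [if_neg hk]
      linarith [hoff k hk]

lemma card_filter_range_le_ncard {W : Set ℕ} [DecidablePred (· ∈ W)] {p : ℕ → ℕ} {j n : ℕ}
    (hW0 : 0 ∉ W) (hp : Function.Injective p) (hlt : ∀ i < j, p i ≤ n) :
    #{i ∈ range j | p i ∈ W} ≤ (W ∩ Set.Icc 1 n).ncard := by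
  rw [← Set.ncard_coe_finset]
  refine Set.ncard_le_ncard_of_injOn p ?_ hp.injOn ((Set.finite_Icc 1 n).inter_of_right W)
  intro i hi
  obtain ⟨hij, hiW⟩ : i < j ∧ p i ∈ W := by simpa using hi
  have hpos : p i ≠ 0 := fun h => hW0 (h ▸ hiW)
  exact ⟨hiW, Nat.one_le_iff_ne_zero.mpr hpos, hlt i hij⟩

lemma tendsto_div_self_of_le_add_mul {r w : ℕ → ℕ} (c : ℕ)
    (hw : Tendsto (fun n : ℕ => (w n : ℝ) / n) atTop (𝓝 0))
    (hle : ∀ n, 1 ≤ n → r n ≤ n) (hge : ∀ n, 1 ≤ n → n ≤ r n + c * w n) :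
    Tendsto (fun n : ℕ => (r n : ℝ) / n) atTop (𝓝 1) := by
  have hlow : Tendsto (fun n : ℕ => 1 - c * ((w n : ℝ) / n)) atTop (𝓝 1) := by
    simpa using tendsto_const_nhds.sub (hw.const_mul (c : ℝ))
  refine tendsto_of_tendsto_of_tendsto_of_le_of_le' hlow tendsto_const_nhds ?_ ?_ <;>
    filter_upwards [eventually_ge_atTop 1] with n hn <;>
    have hn' : (0 : ℝ) < n := by positivity
  · have : (n : ℝ) ≤ r n + c * w n := by exact_mod_cast hge n hn
    rw [mul_div_assoc', one_sub_div hn'.ne', div_le_div_iff_of_pos_right hn']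
    linarith
  · rw [div_le_one hn']
    exact_mod_cast hle n hn

theorem stmt_9_general (N : ℕ) (W : Set ℕ) (hW0 : 0 ∉ W)
    (hdens : Tendsto (fun n : ℕ => ((W ∩ Set.Icc 1 n).ncard : ℝ) / n) atTop (nhds 0))
    (p : ℕ → ℕ) (hp0 : p 0 = 0)
    (hstep : ∀ j : ℕ, (p j ∉ W → p (j + 1) = p j + 1) ∧
      (p j ∈ W → p j < p (j + 1) ∧ p (j + 1) ≤ p j + N))
    (r : ℕ → ℕ)
    (hr : ∀ n : ℕ, 1 ≤ n → n ≤ p (r n) ∧ ∀ r' : ℕ, n ≤ p r' → r n ≤ r') :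
    Tendsto (fun n : ℕ => (r n : ℝ) / n) atTop (nhds 1) := by
  classical
  have hmono : StrictMono p := strictMono_nat_of_lt_succ fun j => by
    by_cases h : p j ∈ W
    · exact ((hstep j).2 h).1
    · linarith [(hstep j).1 h]
  have hbound (j : ℕ) : p j ≤ j + (N - 1) * #{i ∈ range j | p i ∈ W} := by
    have := le_add_mul_card_filter_range (c := N - 1)
      (fun j h => ((hstep j).1 h).le) (fun j h => by have := ((hstep j).2 h).2; omega) j
    rwa [hp0, zero_add] at this
  refine tendsto_div_self_of_le_add_mul (N - 1) hdens
    (fun n hn => (hr n hn).2 n (hmono.id_le n)) fun n hn => ?_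
  have hbelow : ∀ i < r n, p i ≤ n := fun i hi => by
    by_contra! h
    exact ((hr n hn).2 i h.le).not_gt hi
  calc n ≤ p (r n) := (hr n hn).1
    _ ≤ r n + (N - 1) * #{i ∈ range (r n) | p i ∈ W} := hbound (r n)
    _ ≤ r n + (N - 1) * (W ∩ Set.Icc 1 n).ncard := by
      gcongr
      exact card_filter_range_le_ncard hW0 hmono.injective hbelow

/-- Reparametrization lemma: if `W` is a set of positive integers of zero density,
and `p : ℕ → ℕ` satisfies `p 0 = 0`, steps by `1` outside `W` and by at most `N` on `W`
(always strictly increasing), and `r n` is the least `r` with `n ≤ p r`, then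
`r n / n → 1`. -/
theorem stmt_9 (N : ℕ) (hN : 1 ≤ N) (W : Set ℕ) (hW0 : 0 ∉ W)
    (hdens : Tendsto (fun n : ℕ => ((W ∩ Set.Icc 1 n).ncard : ℝ) / n) atTop (nhds 0))
    (p : ℕ → ℕ) (hp0 : p 0 = 0)
    (hstep : ∀ j : ℕ, (p j ∉ W → p (j + 1) = p j + 1) ∧
      (p j ∈ W → p j < p (j + 1) ∧ p (j + 1) ≤ p j + N))
    (r : ℕ → ℕ)
    (hr : ∀ n : ℕ, 1 ≤ n → n ≤ p (r n) ∧ ∀ r' : ℕ, n ≤ p r' → r n ≤ r') :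
    Tendsto (fun n : ℕ => (r n : ℝ) / n) atTop (nhds 1) :=
  stmt_9_general N W hW0 hdens p hp0 hstep r hr
end

section
/- Let (h_n)_{n≥0} be a sequence of real numbers with h_n ≥ 1 for all n, and let D ≥ 1 be a real number with h_{n+1} ≤ D·h_n for all n ≥ 0. Let β₁ > 1 and 0 < β₂ < 1 be real numbers, let N ≥ 1 be an integer, and let W be a set of positive integers (so 0 ∉ W) with zero density: the number w_n of elements of W in {1, …, n} satisfies w_n/n → 0. Assume: (a) h_1 > h_0; (b) for every n ≥ 1 with n ∉ W, one has h_{n+1} − β₂·h_n ≥ β₁·(h_n − β₂·h_{n−1}); (c) for every n ≥ 1 with n ∈ W, there exists an integer t with 0 ≤ t ≤ N such that h_{n+t+1} > h_{n+t} and h_{n+t} > h_n. Then liminf_{n→∞} h_n^{1/n} ≥ β₁. -/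
open Filter Set Topology

/-! Off `W` the quantity `g n = h (n + 1) - β₂ * h n` grows by the factor `β₁`; at a point `m`
with `h m ≤ h (m + 1)` it is at least `(1 - β₂) * h m`, and `h (n + 1) ≥ g n`. So the heights grow
like `β₁ ^ k` along every `W`-free stretch starting at such a point. At a point of `W`,
hypothesis (c) provides such a point again within `N` steps, without loss of height, and the
bound `h (n + 1) ≤ D * h n` controls the heights in between. Hence each visit to `W` costs only a
fixed factor `κ`, giving `h n ≥ κ ^ (w n + 1) * β₁ ^ n`, and `κ ^ ((w n + 1) / n) → 1` because
`W` has density zero. -/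

lemma Nat.disjoint_Ioo_or_exists_mem_disjoint_Ioo (W : Set ℕ) (m n : ℕ) :
    Disjoint (Ioo m n) W ∨ ∃ m' ∈ W ∩ Ioo m n, Disjoint (Ioo m m') W := by
  classical
  by_cases hex : ∃ i, i ∈ W ∩ Ioo m n
  · right
    refine ⟨Nat.find hex, Nat.find_spec hex, disjoint_left.2 fun i hi hiW => ?_⟩
    exact hi.2.not_ge (Nat.find_min' hex ⟨hiW, hi.1, hi.2.trans (Nat.find_spec hex).2.2⟩)
  · exact .inl (disjoint_left.2 fun i hi hiW => hex ⟨i, hiW, hi⟩)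

lemma Set.ncard_inter_Ioc_add_one_le {α : Type*} [Preorder α] [LocallyFiniteOrder α]
    (W : Set α) {a b c n : α} (hb : b ∈ W) (hab : a < b) (hbc : b ≤ c) (hbn : b ≤ n) :
    (W ∩ Ioc c n).ncard + 1 ≤ (W ∩ Ioc a n).ncard := by
  have hfin : (W ∩ Ioc a n).Finite := (finite_Ioc a n).inter_of_right W
  have hsub : W ∩ Ioc c n ⊆ W ∩ Ioc a n :=
    inter_subset_inter_right W (Ioc_subset_Ioc_left (hab.le.trans hbc))
  calc (W ∩ Ioc c n).ncard + 1 = (insert b (W ∩ Ioc c n)).ncard :=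
        (ncard_insert_of_notMem (fun hx => hx.2.1.not_ge hbc) (hfin.subset hsub)).symm
    _ ≤ (W ∩ Ioc a n).ncard := ncard_le_ncard (insert_subset ⟨hb, hab, hbn⟩ hsub) hfin

section HeightGrowth

variable {h : ℕ → ℝ} {β₁ β₂ : ℝ} {W : Set ℕ}

lemma le_pow_mul_of_le_of_le_add {D : ℝ} (hD : 1 ≤ D) (hh : ∀ n, 0 ≤ h n)
    (hDstep : ∀ n, h (n + 1) ≤ D * h n) {n p N : ℕ} (hnp : n ≤ p) (hpN : p ≤ n + N) :
    h p ≤ D ^ N * h n := by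
  obtain ⟨k, rfl⟩ := Nat.exists_eq_add_of_le hnp
  calc h (n + k) ≤ D ^ k * h n :=
        le_geom (u := fun i => h (n + i)) (by linarith) k fun i _ => hDstep (n + i)
    _ ≤ D ^ N * h n := mul_le_mul_of_nonneg_right (pow_le_pow_right₀ hD (by omega)) (hh n)

lemma one_sub_mul_pow_mul_le (hβ₁ : 0 ≤ β₁) (hβ₂ : 0 ≤ β₂) (hh : ∀ n, 0 ≤ h n)
    (hb : ∀ n : ℕ, 1 ≤ n → n ∉ W → β₁ * (h n - β₂ * h (n - 1)) ≤ h (n + 1) - β₂ * h n)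
    {m n : ℕ} (hm : h m ≤ h (m + 1)) (hmn : m < n) (hW : Disjoint (Ioo m n) W) :
    (1 - β₂) * β₁ ^ (n - m - 1) * h m ≤ h n := by
  obtain ⟨k, rfl⟩ : ∃ k, n = m + k + 1 := ⟨n - m - 1, by omega⟩
  set g : ℕ → ℝ := fun i => h (m + i + 1) - β₂ * h (m + i)
  have hgeom : β₁ ^ k * g 0 ≤ g k := geom_le hβ₁ k fun i hi => by
    simpa [g, Nat.add_sub_cancel, add_assoc] using
      hb (m + i + 1) (by omega) (disjoint_left.1 hW ⟨by omega, by omega⟩)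
  calc (1 - β₂) * β₁ ^ (m + k + 1 - m - 1) * h m = β₁ ^ k * ((1 - β₂) * h m) := by
        rw [show m + k + 1 - m - 1 = k by omega]; ring
    _ ≤ β₁ ^ k * g 0 := by gcongr; simp only [g, add_zero]; linarith
    _ ≤ g k := hgeom
    _ ≤ h (m + k + 1) := by simp only [g]; nlinarith [hh (m + k)]

lemma mul_pow_mul_le_of_le_pow_mul {D κ x y z : ℝ} {N q k : ℕ} (hβ₁ : 1 ≤ β₁) (hD : 1 ≤ D)
    (hκ : 0 ≤ κ) (hκD : κ * (D ^ N * β₁ ^ (N + 1)) ≤ 1 - β₂) (hk : k ≤ q + N + 1) (hx : 0 ≤ x)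
    (hxy : (1 - β₂) * β₁ ^ q * x ≤ y) (hyz : y ≤ D ^ N * z) :
    κ * β₁ ^ k * x ≤ z := by
  have hβk : β₁ ^ k ≤ β₁ ^ (N + 1) * β₁ ^ q := by
    rw [← pow_add]; exact pow_le_pow_right₀ hβ₁ (by omega)
  refine le_of_mul_le_mul_left ?_ (by positivity : (0 : ℝ) < D ^ N)
  calc D ^ N * (κ * β₁ ^ k * x) ≤ D ^ N * (κ * (β₁ ^ (N + 1) * β₁ ^ q) * x) := by gcongr
    _ = κ * (D ^ N * β₁ ^ (N + 1)) * (β₁ ^ q * x) := by ring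
    _ ≤ (1 - β₂) * (β₁ ^ q * x) := by gcongr
    _ ≤ D ^ N * z := by rw [← mul_assoc]; exact hxy.trans hyz

theorem pow_ncard_add_one_mul_pow_mul_le {D κ : ℝ} {N : ℕ} (hh : ∀ n, 0 ≤ h n) (hD : 1 ≤ D)
    (hDstep : ∀ n, h (n + 1) ≤ D * h n) (hβ₁ : 1 ≤ β₁) (hβ₂ : 0 ≤ β₂)
    (hb : ∀ n : ℕ, 1 ≤ n → n ∉ W → β₁ * (h n - β₂ * h (n - 1)) ≤ h (n + 1) - β₂ * h n)
    (hc : ∀ n : ℕ, 1 ≤ n → n ∈ W →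
      ∃ t : ℕ, t ≤ N ∧ h (n + t) < h (n + t + 1) ∧ h n < h (n + t))
    (hκ : 0 ≤ κ) (hκD : κ * (D ^ N * β₁ ^ (N + 1)) ≤ 1 - β₂)
    {m n : ℕ} (hm : h m ≤ h (m + 1)) (hmn : m < n) :
    κ ^ ((W ∩ Ioc m n).ncard + 1) * β₁ ^ (n - m) * h m ≤ h n := by
  have hκ1 : κ ≤ 1 := by
    refine le_trans ?_ (hκD.trans (by linarith))
    exact le_mul_of_one_le_right hκ (one_le_mul_of_one_le_of_one_le (one_le_pow₀ hD)
      (one_le_pow₀ hβ₁))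
  have hself : ∀ i, h i ≤ D ^ N * h i := fun i => le_mul_of_one_le_left (hh i) (one_le_pow₀ hD)
  have hdrop : κ ^ ((W ∩ Ioc m n).ncard + 1) * β₁ ^ (n - m) * h m ≤ κ * β₁ ^ (n - m) * h m := by
    gcongr
    exacts [hh m, pow_le_of_le_one hκ hκ1 (by omega)]
  have hstretch := fun {n} => one_sub_mul_pow_mul_le (n := n) (by linarith) hβ₂ hh hb hm
  rcases Nat.disjoint_Ioo_or_exists_mem_disjoint_Ioo W m n with
    hfree | ⟨m', ⟨hm'W, hmm', hm'n⟩, hfree⟩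
  · exact hdrop.trans <| mul_pow_mul_le_of_le_pow_mul hβ₁ hD hκ hκD (by omega) (hh m)
      (hstretch hmn hfree) (hself n)
  obtain ⟨t, htN, hp, hm't⟩ := hc m' (by omega) hm'W
  have hm' : (1 - β₂) * β₁ ^ (m' - m - 1) * h m ≤ h (m' + t) :=
    (hstretch hmm' hfree).trans hm't.le
  -- restart from the new point `m' + t` if it precedes `n`, otherwise step back to `n` with `D`
  rcases lt_or_ge (m' + t) n with hpn | hnp
  · have IH := pow_ncard_add_one_mul_pow_mul_le hh hD hDstep hβ₁ hβ₂ hb hc hκ hκD hp.le hpn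
    have hcard : (W ∩ Ioc (m' + t) n).ncard + 1 ≤ (W ∩ Ioc m n).ncard :=
      ncard_inter_Ioc_add_one_le W hm'W hmm' (Nat.le_add_right m' t) hm'n.le
    have hsplit : β₁ ^ (n - m) = β₁ ^ (n - (m' + t)) * β₁ ^ (m' + t - m) := by
      rw [← pow_add]; congr 1; omega
    calc κ ^ ((W ∩ Ioc m n).ncard + 1) * β₁ ^ (n - m) * h m
        ≤ κ ^ ((W ∩ Ioc (m' + t) n).ncard + 1 + 1) * β₁ ^ (n - m) * h m := by
          rw [mul_assoc, mul_assoc]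
          exact mul_le_mul_of_nonneg_right (pow_le_pow_of_le_one hκ hκ1 (by omega))
            (mul_nonneg (pow_nonneg (zero_le_one.trans hβ₁) _) (hh m))
      _ = κ ^ ((W ∩ Ioc (m' + t) n).ncard + 1) * β₁ ^ (n - (m' + t)) *
            (κ * β₁ ^ (m' + t - m) * h m) := by
          rw [hsplit]; ring
      _ ≤ κ ^ ((W ∩ Ioc (m' + t) n).ncard + 1) * β₁ ^ (n - (m' + t)) * h (m' + t) := by
          gcongr
          exact mul_pow_mul_le_of_le_pow_mul hβ₁ hD hκ hκD (by omega) (hh m) hm' (hself _)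
      _ ≤ h n := IH
  · exact hdrop.trans <| mul_pow_mul_le_of_le_pow_mul hβ₁ hD hκ hκD (by omega) (hh m) hm'
      (le_pow_mul_of_le_of_le_add hD hh hDstep hnp (by omega))
termination_by n - m

end HeightGrowth

lemma le_liminf_rpow_inv_natCast {u : ℕ → ℝ} {w : ℕ → ℕ} {κ β B : ℝ} (hκ : 0 < κ) (hβ : 0 ≤ β)
    (hB : 0 ≤ B) (hw : Tendsto (fun n => (w n : ℝ) / n) atTop (𝓝 0))
    (hlow : ∀ᶠ n in atTop, κ ^ (w n + 1) * β ^ n ≤ u n) (hup : ∀ᶠ n in atTop, u n ≤ B ^ n) :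
    β ≤ liminf (fun n => u n ^ (n : ℝ)⁻¹) atTop := by
  have hexp : Tendsto (fun n => ((w n + 1 : ℕ) : ℝ) / n) atTop (𝓝 0) := by
    simpa [add_div] using hw.add tendsto_one_div_atTop_nhds_zero_nat
  have hroot : ∀ᶠ n : ℕ in atTop,
      κ ^ (((w n + 1 : ℕ) : ℝ) / n) * β = (κ ^ (w n + 1) * β ^ n) ^ (n : ℝ)⁻¹ := by
    filter_upwards [eventually_ne_atTop 0] with n hn
    rw [Real.mul_rpow (by positivity) (by positivity), Real.pow_rpow_inv_natCast hβ hn,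
      ← Real.rpow_natCast, ← Real.rpow_mul hκ.le, div_eq_mul_inv]
  have hlim : Tendsto (fun n => (κ ^ (w n + 1) * β ^ n) ^ (n : ℝ)⁻¹) atTop (𝓝 β) := by
    have := (((Real.continuousAt_const_rpow hκ.ne').tendsto.comp hexp).mul_const β)
    simp only [Function.comp_def, Real.rpow_zero, one_mul] at this
    exact this.congr' hroot
  refine hlim.liminf_eq.symm.le.trans (liminf_le_liminf ?_ hlim.isBoundedUnder_ge ?_)
  · filter_upwards [hlow] with n hn
    exact Real.rpow_le_rpow (by positivity) hn (by positivity)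
  · refine isCoboundedUnder_ge_of_eventually_le atTop (x := B) ?_
    filter_upwards [hlow, hup, eventually_ne_atTop 0] with n hnlow hnup hn
    calc u n ^ (n : ℝ)⁻¹ ≤ (B ^ n) ^ (n : ℝ)⁻¹ :=
          Real.rpow_le_rpow ((by positivity : (0 : ℝ) ≤ _).trans hnlow) hnup (by positivity)
      _ = B := Real.pow_rpow_inv_natCast hB hn

theorem stmt_10_general (h : ℕ → ℝ) (hh : ∀ n, 1 ≤ h n)
    (D : ℝ) (hD : 1 ≤ D) (hDstep : ∀ n : ℕ, h (n + 1) ≤ D * h n)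
    (β₁ β₂ : ℝ) (hβ₁ : 1 < β₁) (hβ₂0 : 0 < β₂) (hβ₂1 : β₂ < 1)
    (N : ℕ) (W : Set ℕ)
    (hdens : Tendsto (fun n : ℕ => ((W ∩ Set.Icc 1 n).ncard : ℝ) / n) atTop (nhds 0))
    (ha : h 0 < h 1)
    (hb : ∀ n : ℕ, 1 ≤ n → n ∉ W →
      β₁ * (h n - β₂ * h (n - 1)) ≤ h (n + 1) - β₂ * h n)
    (hc : ∀ n : ℕ, 1 ≤ n → n ∈ W →
      ∃ t : ℕ, t ≤ N ∧ h (n + t) < h (n + t + 1) ∧ h n < h (n + t)) :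
    β₁ ≤ liminf (fun n : ℕ => (h n) ^ ((n : ℝ)⁻¹)) atTop := by
  have hh0 : ∀ n, 0 ≤ h n := fun n => zero_le_one.trans (hh n)
  set κ := (1 - β₂) / (D ^ N * β₁ ^ (N + 1))
  have hκ : 0 < κ := div_pos (by linarith) (by positivity)
  have hκD : κ * (D ^ N * β₁ ^ (N + 1)) = 1 - β₂ := div_mul_cancel₀ _ (by positivity)
  refine le_liminf_rpow_inv_natCast (B := D * h 0) hκ (by linarith)
    (mul_nonneg (by linarith) (hh0 0)) hdens
    (eventually_atTop.2 ⟨1, fun n hn => ?_⟩) (eventually_atTop.2 ⟨1, fun n hn => ?_⟩)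
  · have := pow_ncard_add_one_mul_pow_mul_le hh0 hD hDstep hβ₁.le hβ₂0.le hb hc hκ.le hκD.le
      ha.le hn
    rw [Nat.sub_zero, ← Set.Icc_add_one_left_eq_Ioc, zero_add] at this
    exact le_mul_of_one_le_right (by positivity) (hh 0) |>.trans this
  · calc h n ≤ D ^ n * h 0 := le_geom (by linarith) n fun i _ => hDstep i
      _ ≤ D ^ n * h 0 ^ n := by gcongr; exact le_self_pow₀ (hh 0) (by omega)
      _ = (D * h 0) ^ n := (mul_pow D (h 0) n).symm

/-- Analytic core of the proof of the Kawaguchi–Silverman conjecture for surfaces: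
a height-like sequence `h_n ≥ 1` with bounded one-step growth, satisfying the recursion
`h_{n+1} - β₂ h_n ≥ β₁ (h_n - β₂ h_{n-1})` off a density-zero set `W` of positive
integers, and gaining height within `N` steps at times in `W`, has
`liminf h_n^{1/n} ≥ β₁`. -/
theorem stmt_10 (h : ℕ → ℝ) (hh : ∀ n, 1 ≤ h n)
    (D : ℝ) (hD : 1 ≤ D) (hDstep : ∀ n : ℕ, h (n + 1) ≤ D * h n)
    (β₁ β₂ : ℝ) (hβ₁ : 1 < β₁) (hβ₂0 : 0 < β₂) (hβ₂1 : β₂ < 1)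
    (N : ℕ) (hN : 1 ≤ N) (W : Set ℕ) (hW0 : 0 ∉ W)
    (hdens : Tendsto (fun n : ℕ => ((W ∩ Set.Icc 1 n).ncard : ℝ) / n) atTop (nhds 0))
    (ha : h 0 < h 1)
    (hb : ∀ n : ℕ, 1 ≤ n → n ∉ W →
      β₁ * (h n - β₂ * h (n - 1)) ≤ h (n + 1) - β₂ * h n)
    (hc : ∀ n : ℕ, 1 ≤ n → n ∈ W →
      ∃ t : ℕ, t ≤ N ∧ h (n + t) < h (n + t + 1) ∧ h n < h (n + t)) :
    β₁ ≤ liminf (fun n : ℕ => (h n) ^ ((n : ℝ)⁻¹)) atTop :=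
  stmt_10_general h hh D hD hDstep β₁ β₂ hβ₁ hβ₂0 hβ₂1 N W hdens ha hb hc
end
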